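/- Let μ be the uniform distribution on a finite set Ω of 2^m binary sequences of length N (N ≥ m) whose length-m prefixes enumerate all of {0,1}^m. Then for any prediction strategy (a family of functions f_t : {0,1}^{t-1} → [0,1] giving the probability of predicting 1 at time t), the expected fraction of prediction errors over the first N symbols, averaged over Ω, is at least m/(2N). -/
import Mathlib

lemma sum_pair_half (m : ℕ) (t : Fin m) (c : (Fin (t : ℕ) → Bool) → ℝ)
    (hc : ∀ p, c p ∈ Set.Icc (0 : ℝ) 1) :
    ∑ y : Fin m → Bool, |(if y t then (1 : ℝ) else 0) - c (fun i => y (Fin.castLE t.2.le i))|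
      = 2 ^ m / 2 := by
  set g : (Fin m → Bool) → ℝ :=
    fun y => |(if y t then (1 : ℝ) else 0) - c (fun i => y (Fin.castLE t.2.le i))| with hg
  have hinv : Function.Involutive (fun y : Fin m → Bool => Function.update y t (!y t)) := by
    intro y; funext i
    by_cases h : i = t
    · subst h; simp
    · simp [Function.update_of_ne h]
  set σ := hinv.toPerm with hσ
  have h1 : ∑ y : Fin m → Bool, g y = ∑ y : Fin m → Bool, g (σ y) :=
    (Equiv.sum_comp σ g).symm
  have hpair : ∀ y : Fin m → Bool, g y + g (σ y) = 1 := by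
    intro y
    have hprefix : (fun i : Fin (t : ℕ) => (σ y) (Fin.castLE t.2.le i))
        = fun i : Fin (t : ℕ) => y (Fin.castLE t.2.le i) := by
      funext i
      have hne : Fin.castLE t.2.le i ≠ t := by
        intro h
        have h2 := congrArg Fin.val h
        have h3 := i.2
        simp [Fin.castLE] at h2
        omega
      simp [hσ, Function.Involutive.toPerm, Function.update_of_ne hne]
    have hσt : (σ y) t = !y t := by
      simp [hσ, Function.Involutive.toPerm]
    set p := c (fun i : Fin (t : ℕ) => y (Fin.castLE t.2.le i)) with hp
    have hp0 : 0 ≤ p := (hc _).1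
    have hp1 : p ≤ 1 := (hc _).2
    simp only [hg, hprefix, hσt, ← hp]
    have e0 : (if false = true then (1:ℝ) else 0) = 0 := by norm_num
    have e1 : (if true = true then (1:ℝ) else 0) = 1 := by norm_num
    cases h : y t
    · simp only [h, Bool.not_false, e0, e1, eq_self_iff_true, if_true]
      rw [abs_of_nonpos (by linarith), abs_of_nonneg (by linarith)]; ring
    · simp only [h, Bool.not_true, e0, e1, eq_self_iff_true, if_true]
      rw [abs_of_nonneg (by linarith), abs_of_nonpos (by linarith)]; ring
  have h2 : 2 * ∑ y : Fin m → Bool, g y = (2 : ℝ) ^ m := by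
    have e1 : 2 * ∑ y : Fin m → Bool, g y
        = ∑ y : Fin m → Bool, (g y + g (σ y)) := by
      rw [Finset.sum_add_distrib, ← h1]; ring
    have e2 : ∑ y : Fin m → Bool, (g y + g (σ y)) = ∑ _y : Fin m → Bool, (1 : ℝ) :=
      Finset.sum_congr rfl (fun y _ => hpair y)
    rw [e1, e2, Finset.sum_const, Finset.card_univ]
    simp
  linarith

/-- Lower bound on the expected fraction of prediction errors, averaged over a
uniform distribution on a set `Ω` of `2^m` binary sequences of length `N` whose
length-`m` prefixes enumerate all of `{0,1}^m`: it is at least `m / (2N)`. -/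
theorem expected_error_lower_bound (N m : ℕ) (hm : 0 < m) (hmN : m ≤ N)
    (Ω : Finset (Fin N → Bool)) (hcard : Ω.card = 2 ^ m)
    (hprefix : Set.InjOn (fun x : Fin N → Bool => fun i : Fin m => x (Fin.castLE hmN i))
      (Ω : Set (Fin N → Bool)))
    (f : (t : Fin N) → (Fin (t : ℕ) → Bool) → ℝ)
    (hf : ∀ t p, f t p ∈ Set.Icc (0 : ℝ) 1) :
    (m : ℝ) / (2 * N) ≤
      (1 / N) * ((Ω.card : ℝ)⁻¹ *
        ∑ x ∈ Ω, ∑ t : Fin N,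
          |(if x t then (1 : ℝ) else 0) - f t (fun i => x (Fin.castLE t.2.le i))|) := by
  have hN : 0 < N := lt_of_lt_of_le hm hmN
  set φ : (Fin N → Bool) → (Fin m → Bool) :=
    fun x => fun i : Fin m => x (Fin.castLE hmN i) with hφ
  -- surjectivity of φ from Ω onto all of (Fin m → Bool)
  have himg : Ω.image φ = Finset.univ := by
    apply Finset.eq_univ_of_card
    rw [Finset.card_image_of_injOn hprefix, hcard]
    simp
  have hsurj : ∀ y : Fin m → Bool, ∃ x ∈ Ω, φ x = y := by
    intro y
    have : y ∈ Ω.image φ := by rw [himg]; exact Finset.mem_univ y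
    simpa [Finset.mem_image] using this
  -- for each t < m, the inner sum over Ω equals 2^m / 2
  have hkey : ∀ t : Fin N, (t : ℕ) < m →
      ∑ x ∈ Ω, |(if x t then (1 : ℝ) else 0) - f t (fun i => x (Fin.castLE t.2.le i))|
        = 2 ^ m / 2 := by
    intro t ht
    set t' : Fin m := ⟨(t : ℕ), ht⟩ with ht'
    have hc : ∀ p : Fin ((t' : Fin m) : ℕ) → Bool, f t p ∈ Set.Icc (0 : ℝ) 1 :=
      fun p => hf t p
    have hbij : ∑ x ∈ Ω,
        |(if x t then (1 : ℝ) else 0) - f t (fun i => x (Fin.castLE t.2.le i))|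
        = ∑ y : Fin m → Bool,
          |(if y t' then (1 : ℝ) else 0) - f t (fun i => y (Fin.castLE t'.2.le i))| := by
      apply Finset.sum_bij (i := fun x _ => φ x)
      · intro a _; exact Finset.mem_univ _
      · intro a ha b hb hab; exact hprefix ha hb hab
      · intro y _
        obtain ⟨x, hx, h⟩ := hsurj y
        exact ⟨x, hx, h⟩
      · intro x hx
        have h1 : φ x t' = x t := rfl
        have h2 : (fun i : Fin ((t' : Fin m) : ℕ) => φ x (Fin.castLE t'.2.le i))
            = fun i => x (Fin.castLE t.2.le i) := rfl
        rw [h1, h2]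
    rw [hbij]
    exact sum_pair_half m t' (fun p => f t p) hc
  -- the set of early times
  have hfiltcard : (Finset.univ.filter (fun t : Fin N => (t : ℕ) < m)).card = m := by
    have himage : Finset.univ.filter (fun t : Fin N => (t : ℕ) < m)
        = Finset.image (Fin.castLE hmN) Finset.univ := by
      ext t
      simp only [Finset.mem_filter, Finset.mem_univ, true_and, Finset.mem_image]
      constructor
      · intro ht; exact ⟨⟨(t : ℕ), ht⟩, Fin.ext rfl⟩
      · rintro ⟨i, rfl⟩; exact i.2
    rw [himage, Finset.card_image_of_injective _ (Fin.castLE_injective hmN)]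
    simp
  -- lower bound on the double sum
  set S := ∑ x ∈ Ω, ∑ t : Fin N,
      |(if x t then (1 : ℝ) else 0) - f t (fun i => x (Fin.castLE t.2.le i))| with hSdef
  have hS : (m : ℝ) * (2 ^ m / 2) ≤ S := by
    have hswap : S = ∑ t : Fin N, ∑ x ∈ Ω,
        |(if x t then (1 : ℝ) else 0) - f t (fun i => x (Fin.castLE t.2.le i))| :=
      Finset.sum_comm
    rw [hswap]
    have hsub : ∑ t ∈ Finset.univ.filter (fun t : Fin N => (t : ℕ) < m), ∑ x ∈ Ω,
        |(if x t then (1 : ℝ) else 0) - f t (fun i => x (Fin.castLE t.2.le i))|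
        ≤ ∑ t : Fin N, ∑ x ∈ Ω,
        |(if x t then (1 : ℝ) else 0) - f t (fun i => x (Fin.castLE t.2.le i))| := by
      apply Finset.sum_le_sum_of_subset_of_nonneg (Finset.filter_subset _ _)
      intro t _ _
      exact Finset.sum_nonneg fun x _ => abs_nonneg _
    refine le_trans ?_ hsub
    have : ∀ t ∈ Finset.univ.filter (fun t : Fin N => (t : ℕ) < m),
        ∑ x ∈ Ω, |(if x t then (1 : ℝ) else 0) - f t (fun i => x (Fin.castLE t.2.le i))|
        = 2 ^ m / 2 := fun t ht => hkey t (Finset.mem_filter.mp ht).2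
    rw [Finset.sum_congr rfl this, Finset.sum_const, hfiltcard, nsmul_eq_mul]
  -- final arithmetic
  rw [hcard]
  have h2m : (0 : ℝ) < 2 ^ m := by positivity
  have hNpos : (0 : ℝ) < N := by exact_mod_cast hN
  push_cast
  calc (m : ℝ) / (2 * N) = (1 / N) * (((2 : ℝ) ^ m)⁻¹ * ((m : ℝ) * (2 ^ m / 2))) := by
        have e1 : (m : ℝ) * ((2:ℝ) ^ m / 2) = (2:ℝ) ^ m * ((m:ℝ) / 2) := by ring
        rw [e1, inv_mul_cancel_left₀ (ne_of_gt h2m)]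
        ring
    _ ≤ (1 / N) * (((2 : ℝ) ^ m)⁻¹ * S) := by
        have h3 := mul_le_mul_of_nonneg_left hS (by positivity : (0:ℝ) ≤ ((2:ℝ) ^ m)⁻¹)
        exact mul_le_mul_of_nonneg_left h3 (by positivity)
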